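/- For every integer ℓ ≥ 2, ex(Q_n, C_{2ℓ}) = Ω(n^(1/2 + 1/(4ℓ−2)) * 2^n): there exists c > 0 such that for all sufficiently large n, Q_n has a C_{2ℓ}-free subgraph with at least c * n^(1/2 + 1/(4ℓ−2)) * 2^n edges. -/

import Mathlib

/-!
Colour the edges of `Q_n` with `K ≈ n^((ℓ-1)/(2ℓ-1))` colours, keep one colour class and delete
one edge from every `2ℓ`-cycle that is monochromatic in it. Averaged over all colourings and
colours, a class has `|E(Q_n)|/K = n 2^(n-1)/K` edges and contains `N/K^(2ℓ)` of the `N`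
`2ℓ`-cycles. A closed walk of length `2ℓ` is determined by its start and its sequence of
directions, and every direction occurs an even number of times, so at most `ℓ` distinct ones:
hence `N ≤ 2^n n^ℓ ℓ^(2ℓ)`. For this `K` the deletions cost at most half of the class, which
leaves `≳ n 2^n / K = n^(1/2 + 1/(4ℓ-2)) 2^n` edges.
-/

/-- The hypercube graph `Q_n`: vertices are subsets of `[n]`, with edges between `A ⊆ B`
with `|B| = |A| + 1`. -/
def Qgraph (n : ℕ) : SimpleGraph (Finset (Fin n)) where
  Adj A B := (A ⊆ B ∧ B.card = A.card + 1) ∨ (B ⊆ A ∧ A.card = B.card + 1)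
  symm := ⟨by intro A B h; tauto⟩
  loopless := ⟨by intro A h; rcases h with ⟨_, h⟩ | ⟨_, h⟩ <;> omega⟩


/-- `H` is contained in `G`: there is an injective (on the support of `H`) homomorphism,
i.e. `G` has a subgraph isomorphic to `H`. -/
def GContains {α β : Type*} (H : SimpleGraph α) (G : SimpleGraph β) : Prop :=
  ∃ f : α → β, Set.InjOn f {v | ∃ w, H.Adj v w} ∧ ∀ u v, H.Adj u v → G.Adj (f u) (f v)

open Finset SimpleGraph

lemma card_filter_forall_eq_mul_pow {α β : Type*} [Fintype α] [DecidableEq α] [Fintype β]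
    [DecidableEq β] (s : Finset α) (b : β) :
    #{g : α → β | ∀ a ∈ s, g a = b} * Fintype.card β ^ #s =
      Fintype.card β ^ Fintype.card α := by
  have : ({g : α → β | ∀ a ∈ s, g a = b} : Finset _) =
      Fintype.piFinset fun a => if a ∈ s then {b} else univ := by
    ext g
    simp only [mem_filter, mem_univ, true_and, Fintype.mem_piFinset]
    refine forall_congr' fun a => ?_
    split_ifs with ha <;> simp [ha]
  rw [this, Fintype.card_piFinset, ← card_compl_add_card s, pow_add]
  simp only [apply_ite card, card_singleton, card_univ, prod_ite, prod_const_one, one_mul,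
    prod_const]
  congr 3
  ext
  simp

section Deletion

variable {β : Type*} [Fintype β] [DecidableEq β] {E : Finset β} {𝒞 : Finset (Finset β)} {m K : ℕ}

/- Summed over all pairs `(χ, c)`, both sides equal `K ^ (T + m) * #E + K ^ (T + 1) * #𝒞`
with `T = card β`. -/
lemma exists_coloring_card_filter_le (hm : 0 < m) (hK : 0 < K) (h𝒞 : ∀ C ∈ 𝒞, #C = m) :
    ∃ (χ : β → Fin K) (c : Fin K),
      K ^ (m - 1) * #E + K ^ m * #{C ∈ 𝒞 | ∀ e ∈ C, χ e = c} ≤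
        K ^ m * #{e ∈ E | χ e = c} + #𝒞 := by
  have : NeZero K := ⟨hK.ne'⟩
  set T := Fintype.card β
  have hclass (χ : β → Fin K) : ∑ c, #{e ∈ E | χ e = c} = #E :=
    (card_eq_sum_card_fiberwise fun e _ => mem_univ (χ e)).symm
  have hmono :
      K ^ m * ∑ χ : β → Fin K, ∑ c, #{C ∈ 𝒞 | ∀ e ∈ C, χ e = c} = K ^ T * K * #𝒞 := by
    have hswap : ∑ χ : β → Fin K, ∑ c, #{C ∈ 𝒞 | ∀ e ∈ C, χ e = c} =
        ∑ C ∈ 𝒞, ∑ c : Fin K, #{χ : β → Fin K | ∀ e ∈ C, χ e = c} := by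
      simp only [card_filter]
      rw [sum_comm]
      simp_rw [sum_comm (s := (univ : Finset (β → Fin K))) (t := 𝒞)]
      rw [sum_comm]
    have hcount (C : Finset β) (c : Fin K) :
        K ^ #C * #{χ : β → Fin K | ∀ e ∈ C, χ e = c} = K ^ T := by
      simpa [mul_comm] using card_filter_forall_eq_mul_pow C c
    rw [hswap, mul_sum,
      sum_congr rfl fun C hC => by rw [← h𝒞 C hC, mul_sum, sum_congr rfl fun c _ => hcount C c]]
    simp [mul_comm]
  have hsum :
      ∑ χ : β → Fin K, ∑ c, (K ^ (m - 1) * #E + K ^ m * #{C ∈ 𝒞 | ∀ e ∈ C, χ e = c}) =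
        ∑ χ : β → Fin K, ∑ c, (K ^ m * #{e ∈ E | χ e = c} + #𝒞) := by
    simp only [sum_add_distrib, ← mul_sum, hclass, sum_const, card_univ, Fintype.card_fun,
      Fintype.card_fin, smul_eq_mul]
    rw [hmono]
    obtain ⟨k, rfl⟩ := Nat.exists_eq_add_of_lt hm
    simp only [zero_add, add_tsub_cancel_right, pow_succ]
    ring
  obtain ⟨χ, -, hχ⟩ := exists_le_of_sum_le univ_nonempty hsum.le
  obtain ⟨c, -, hc⟩ := exists_le_of_sum_le univ_nonempty hχ
  exact ⟨χ, c, hc⟩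

theorem exists_subset_forall_not_subset (hm : 0 < m) (hK : 0 < K) (h𝒞 : ∀ C ∈ 𝒞, #C = m) :
    ∃ S ⊆ E, (∀ C ∈ 𝒞, ¬C ⊆ S) ∧ K ^ (m - 1) * #E ≤ K ^ m * #S + #𝒞 := by
  obtain ⟨χ, c, hχ⟩ := exists_coloring_card_filter_le (E := E) hm hK h𝒞
  choose r hr using fun C (hC : C ∈ 𝒞) => card_pos.1 (h𝒞 C hC ▸ hm)
  set mono := {C ∈ 𝒞 | ∀ e ∈ C, χ e = c}
  set R := mono.attach.image fun C : mono => r C.1 (mem_filter.1 C.2).1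
  refine ⟨{e ∈ E | χ e = c} \ R, sdiff_subset.trans (filter_subset _ _), ?_, ?_⟩
  · intro C hC hCS
    have hmono : C ∈ mono :=
      mem_filter.2 ⟨hC, fun e he => (mem_filter.1 (sdiff_subset (hCS he))).2⟩
    exact (mem_sdiff.1 (hCS (hr C hC))).2 (mem_image_of_mem _ (mem_attach _ ⟨C, hmono⟩))
  · have hcard : #{e ∈ E | χ e = c} ≤ #({e ∈ E | χ e = c} \ R) + #mono :=
      card_le_card_sdiff_add_card.trans
        (Nat.add_le_add_left (card_image_le.trans card_attach.le) _)
    have := Nat.mul_le_mul_left (K ^ m) hcard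
    rw [mul_add] at this
    omega

end Deletion

lemma even_card_filter_comp_ne {α : Type*} [Fintype α] (σ : Equiv.Perm α) (b : α → Bool) :
    Even #{a | b (σ a) ≠ b a} := by
  let ind : Bool → ZMod 2 := fun x => if x then 1 else 0
  have hflip (x y : Bool) : (if y ≠ x then (1 : ZMod 2) else 0) = ind y - ind x := by
    cases x <;> cases y <;> decide
  rw [← ZMod.natCast_eq_zero_iff_even, natCast_card_filter]
  simp only [hflip, sum_sub_distrib, Equiv.sum_comp σ (fun a => ind (b a)), sub_self]

lemma two_mul_card_image_le_of_even_fibers {α β : Type*} [Fintype α] [DecidableEq β]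
    (d : α → β) (h : ∀ b, Even #{a | d a = b}) : 2 * #(univ.image d) ≤ Fintype.card α := by
  rw [← card_univ, card_eq_sum_card_fiberwise fun a _ => mem_image_of_mem d (mem_univ a),
    mul_comm, ← smul_eq_mul, ← sum_const]
  refine sum_le_sum fun b hb => ?_
  obtain ⟨a, -, rfl⟩ := mem_image.1 hb
  obtain ⟨k, hk⟩ := h (d a)
  have : 0 < #{x | d x = d a} := card_pos.2 ⟨a, by simp⟩
  omega

/- A function with at most `k` values factors through `Fin k`. -/
lemma card_filter_card_image_le {α β : Type*} [Fintype α] [DecidableEq α] [Nonempty α]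
    [Fintype β] [DecidableEq β] (k : ℕ) :
    #{d : α → β | #(univ.image d) ≤ k} ≤ Fintype.card β ^ k * k ^ Fintype.card α := by
  calc #{d : α → β | #(univ.image d) ≤ k}
      ≤ #((univ : Finset ((Fin k → β) × (α → Fin k))).image fun ep => ep.1 ∘ ep.2) := by
        refine card_le_card fun d hd => ?_
        set s := univ.image d
        have hs : #s ≤ k := (mem_filter.1 hd).2
        have : Nonempty s := ⟨⟨d (Classical.arbitrary α), mem_image_of_mem d (mem_univ _)⟩⟩
        let ι : s ↪ Fin k := s.equivFin.toEmbedding.trans (Fin.castLEEmb hs)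
        refine mem_image.2 ⟨(fun j => (Function.invFun ι j).1,
          fun a => ι ⟨d a, mem_image_of_mem d (mem_univ a)⟩), mem_univ _, funext fun a => ?_⟩
        simp [Function.leftInverse_invFun ι.injective _]
    _ ≤ _ := card_image_le
    _ = _ := by simp

open Fin.NatCast in
lemma Fin.injective_zero_symmDiff_succ {α : Type*} [GeneralizedBooleanAlgebra α] {m : ℕ}
    [NeZero m] :
    Function.Injective fun f : Fin m → α => (f 0, fun i => symmDiff (f i) (f (i + 1))) := by
  intro f g h
  simp only [Prod.mk.injEq, funext_iff] at h
  have hcast (k : ℕ) : f (k : Fin m) = g k := by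
    induction k with
    | zero => simpa using h.1
    | succ k ih =>
      rw [Nat.cast_succ, ← symmDiff_symmDiff_cancel_left (f k) (f (k + 1)), h.2, ih,
        symmDiff_symmDiff_cancel_left]
  funext i
  simpa using hcast i

lemma SimpleGraph.edgeSet_fromEdgeSet_of_subset {V : Type*} {G : SimpleGraph V}
    {s : Set (Sym2 V)} (h : s ⊆ G.edgeSet) : (fromEdgeSet s).edgeSet = s := by
  rw [edgeSet_fromEdgeSet, sdiff_eq_left]
  exact Set.disjoint_left.2 fun e he hd => G.not_isDiag_of_mem_edgeSet (h he) hd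

section Cycles

variable {V : Type*} {m : ℕ} [NeZero m]

def cycleEdgeFinset [DecidableEq V] (f : Fin m → V) : Finset (Sym2 V) :=
  univ.image fun i => s(f i, f (i + 1))

lemma card_cycleEdgeFinset [DecidableEq V] (hm : 3 ≤ m) {f : Fin m → V}
    (hf : Function.Injective f) : #(cycleEdgeFinset f) = m := by
  refine (card_image_of_injective _ fun i j hij => ?_).trans (by simp)
  rcases Sym2.eq_iff.1 hij with ⟨h, -⟩ | ⟨h₁, h₂⟩
  · exact hf h
  · have h : j + (1 + 1) = j + 0 := by rw [add_zero, ← add_assoc, ← hf h₁, hf h₂]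
    have h2 : ((1 + 1 : Fin m) : ℕ) = 2 := by
      rw [Fin.val_add, Fin.val_one', Nat.mod_eq_of_lt (by omega : 1 < m)]
      exact Nat.mod_eq_of_lt (by omega)
    simp [add_left_cancel h] at h2

lemma exists_injective_forall_adj_of_gContains_cycleGraph {G : SimpleGraph V} (hm : 2 ≤ m)
    (h : GContains (cycleGraph m) G) :
    ∃ f : Fin m → V, Function.Injective f ∧ ∀ i, G.Adj (f i) (f (i + 1)) := by
  obtain ⟨f, hinj, hadj⟩ := h
  have hsucc (i : Fin m) : (cycleGraph m).Adj i (i + 1) := by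
    rw [cycleGraph_adj', add_sub_cancel_left, Fin.val_one', Nat.mod_eq_of_lt (by omega)]
    exact Or.inr rfl
  exact ⟨f, fun i j hij => hinj ⟨_, hsucc i⟩ ⟨_, hsucc j⟩ hij, fun i => hadj _ _ (hsucc i)⟩

end Cycles

namespace Qgraph

variable {n : ℕ}

instance : DecidableRel (Qgraph n).Adj := fun A B =>
  inferInstanceAs (Decidable ((A ⊆ B ∧ #B = #A + 1) ∨ (B ⊆ A ∧ #A = #B + 1)))

lemma adj_iff_exists_eq_symmDiff {A B : Finset (Fin n)} :
    (Qgraph n).Adj A B ↔ ∃ x, B = symmDiff A {x} := by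
  have h (A B : Finset (Fin n)) : A ⊆ B ∧ #B = #A + 1 ↔ ∃ x ∉ A, B = symmDiff A {x} := by
    rw [eq_comm (a := #B), ← exists_eq_insert_iff]
    refine exists_congr fun x => and_congr_right fun hx => ?_
    rw [eq_comm, show symmDiff A {x} = insert x A by ext; grind [mem_symmDiff]]
  simp only [Qgraph, h]
  constructor
  · rintro (⟨x, -, hx⟩ | ⟨x, -, rfl⟩)
    · exact ⟨x, hx⟩
    · exact ⟨x, (symmDiff_symmDiff_cancel_right _ _).symm⟩
  · rintro ⟨x, rfl⟩
    by_cases hx : x ∈ A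
    · exact Or.inr ⟨x, by grind [mem_symmDiff], (symmDiff_symmDiff_cancel_right _ _).symm⟩
    · exact Or.inl ⟨x, hx, rfl⟩

lemma degree_eq (A : Finset (Fin n)) : (Qgraph n).degree A = n := by
  have : (Qgraph n).neighborFinset A = univ.image fun x => symmDiff A {x} := by
    ext B
    simp [adj_iff_exists_eq_symmDiff, eq_comm]
  rw [← card_neighborFinset_eq_degree, this, card_image_of_injective _ fun x y h => ?_,
    card_univ, Fintype.card_fin]
  simpa using h

lemma two_mul_card_edgeFinset : 2 * #(Qgraph n).edgeFinset = n * 2 ^ n := by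
  simp [← sum_degrees_eq_twice_card_edges, degree_eq, mul_comm]

/- Coordinate `x` flips exactly at the steps in direction `x`, and the walk is closed. -/
lemma exists_directions_of_forall_adj {m : ℕ} [NeZero m] {f : Fin m → Finset (Fin n)}
    (hf : ∀ i, (Qgraph n).Adj (f i) (f (i + 1))) :
    ∃ d : Fin m → Fin n, 2 * #(univ.image d) ≤ m ∧ ∀ i, f (i + 1) = symmDiff (f i) {d i} := by
  choose d hd using fun i => adj_iff_exists_eq_symmDiff.1 (hf i)
  refine ⟨d, ?_, hd⟩
  have hfiber (x : Fin n) :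
      #{i | d i = x} = #{i | decide (x ∈ f (Equiv.addRight 1 i)) ≠ decide (x ∈ f i)} := by
    refine congrArg card (filter_congr fun i _ => ?_)
    by_cases h : x = d i <;> simp [hd i, h, eq_comm (a := d i), mem_symmDiff]
  simpa using two_mul_card_image_le_of_even_fibers d fun x =>
    hfiber x ▸ even_card_filter_comp_ne (Equiv.addRight 1) fun i => decide (x ∈ f i)

lemma card_filter_forall_adj_le (ℓ : ℕ) [NeZero ℓ] :
    #{f : Fin (2 * ℓ) → Finset (Fin n) | ∀ i, (Qgraph n).Adj (f i) (f (i + 1))} ≤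
      2 ^ n * (n ^ ℓ * ℓ ^ (2 * ℓ)) := by
  set D : Finset (Fin (2 * ℓ) → Fin n) := {d | #(univ.image d) ≤ ℓ}
  calc _ ≤ #(univ ×ˢ D.image fun d i => ({d i} : Finset (Fin n))) := by
        refine card_le_card_of_injOn (fun f => (f 0, fun i => symmDiff (f i) (f (i + 1))))
          (fun f hf => ?_) Fin.injective_zero_symmDiff_succ.injOn
        obtain ⟨d, hd, hstep⟩ := exists_directions_of_forall_adj (mem_filter.1 hf).2
        simp only [coe_product, coe_univ, coe_image, Set.mem_prod, Set.mem_univ, true_and,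
          Set.mem_image, mem_coe]
        refine ⟨d, mem_filter.2 ⟨mem_univ _, by omega⟩, funext fun i => ?_⟩
        rw [hstep, symmDiff_symmDiff_cancel_left]
    _ ≤ 2 ^ n * #D := by
        rw [card_product, card_univ, Fintype.card_finset, Fintype.card_fin]
        exact Nat.mul_le_mul_left _ card_image_le
    _ ≤ _ := by
        refine Nat.mul_le_mul_left _ ?_
        simpa using card_filter_card_image_le (α := Fin (2 * ℓ)) (β := Fin n) ℓ

theorem exists_cycleGraph_free_subgraph {ℓ K : ℕ} (hℓ : 2 ≤ ℓ) (hK : 0 < K)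
    (hKpow : 4 * ℓ ^ (2 * ℓ) * n ^ (ℓ - 1) ≤ K ^ (2 * ℓ - 1)) :
    ∃ G ≤ Qgraph n, ¬GContains (cycleGraph (2 * ℓ)) G ∧ n * 2 ^ n ≤ 4 * K * G.edgeSet.ncard := by
  have : NeZero ℓ := ⟨by omega⟩
  set 𝒞 := ({f : Fin (2 * ℓ) → Finset (Fin n) |
    Function.Injective f ∧ ∀ i, (Qgraph n).Adj (f i) (f (i + 1))} : Finset _).image cycleEdgeFinset
  have h𝒞 : ∀ C ∈ 𝒞, #C = 2 * ℓ := by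
    simp only [𝒞, mem_image, mem_filter, mem_univ, true_and]
    rintro _ ⟨f, ⟨hf, -⟩, rfl⟩
    exact card_cycleEdgeFinset (by omega) hf
  have h𝒞card : #𝒞 ≤ 2 ^ n * (n ^ ℓ * ℓ ^ (2 * ℓ)) :=
    card_image_le.trans ((card_le_card fun f hf => by
      simp only [mem_filter] at hf ⊢; exact ⟨hf.1, hf.2.2⟩).trans (card_filter_forall_adj_le ℓ))
  obtain ⟨S, hSE, hS𝒞, hS⟩ :=
    exists_subset_forall_not_subset (E := (Qgraph n).edgeFinset) (by omega) hK h𝒞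
  have hSE' : (S : Set _) ⊆ (Qgraph n).edgeSet := by
    rw [← coe_edgeFinset]; exact_mod_cast hSE
  have hedge := edgeSet_fromEdgeSet_of_subset hSE'
  have hle := edgeSet_subset_edgeSet.1 (hedge ▸ hSE')
  refine ⟨_, hle, fun hC => ?_, ?_⟩
  · obtain ⟨f, hf, hadj⟩ := exists_injective_forall_adj_of_gContains_cycleGraph (by omega) hC
    refine hS𝒞 _ (mem_image_of_mem _ (mem_filter.2 ⟨mem_univ _, hf, fun i => hle (hadj i)⟩)) ?_
    intro e he
    obtain ⟨i, -, rfl⟩ := mem_image.1 he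
    have hi := (mem_edgeSet _).2 (hadj i)
    rwa [hedge, mem_coe] at hi
  · rw [hedge, Set.ncard_coe_finset]
    have hpow : K ^ (2 * ℓ) = K ^ (2 * ℓ - 1) * K := by rw [← pow_succ]; congr 1; omega
    have h4𝒞 : 4 * #𝒞 ≤ K ^ (2 * ℓ - 1) * (n * 2 ^ n) :=
      calc 4 * #𝒞 ≤ 4 * (2 ^ n * (n ^ ℓ * ℓ ^ (2 * ℓ))) := Nat.mul_le_mul_left 4 h𝒞card
        _ = 4 * ℓ ^ (2 * ℓ) * n ^ (ℓ - 1) * (n * 2 ^ n) := by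
          rw [show n ^ ℓ = n * n ^ (ℓ - 1) by rw [← pow_succ']; congr 1; omega]; ring
        _ ≤ _ := Nat.mul_le_mul_right _ hKpow
    have hE := congrArg (K ^ (2 * ℓ - 1) * ·) (two_mul_card_edgeFinset (n := n))
    rw [hpow] at hS
    refine Nat.le_of_mul_le_mul_left ?_ (by positivity : 0 < K ^ (2 * ℓ - 1))
    nlinarith

end Qgraph

lemma exists_pow_le_pow_and_le_rpow {n p q C : ℕ} (hn : 1 ≤ n) (hq : q ≠ 0) (hC : 0 < C) :
    ∃ K : ℕ, 0 < K ∧ C * n ^ p ≤ K ^ q ∧ (K : ℝ) ≤ 2 * C * (n : ℝ) ^ ((p : ℝ) / q) := by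
  set x := (n : ℝ) ^ ((p : ℝ) / q)
  have hx : 1 ≤ x := Real.one_le_rpow (by exact_mod_cast hn) (by positivity)
  have hxq : x ^ q = (n : ℝ) ^ p := by
    rw [← Real.rpow_natCast, ← Real.rpow_mul (Nat.cast_nonneg n),
      div_mul_cancel₀ _ (by exact_mod_cast hq), Real.rpow_natCast]
  refine ⟨C * ⌈x⌉₊, by positivity, ?_, ?_⟩
  · rw [mul_pow]
    refine Nat.mul_le_mul (Nat.le_self_pow hq C) ?_
    exact_mod_cast hxq ▸ pow_le_pow_left₀ (by positivity) (Nat.le_ceil x) q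
  · have := Nat.ceil_lt_add_one (zero_le_one.trans hx)
    push_cast
    nlinarith

lemma cast_sub_one_div_cast_two_mul_sub_one_add_eq_one {ℓ : ℕ} (hℓ : 1 ≤ ℓ) :
    ((ℓ - 1 : ℕ) : ℝ) / ((2 * ℓ - 1 : ℕ) : ℝ) + ((1 : ℝ) / 2 + 1 / (4 * (ℓ : ℝ) - 2)) = 1 := by
  have : (1 : ℝ) ≤ ℓ := by exact_mod_cast hℓ
  have : (ℓ : ℝ) * 2 - 1 ≠ 0 := by linarith
  push_cast [Nat.cast_sub hℓ, Nat.cast_sub (by omega : 1 ≤ 2 * ℓ)]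
  rw [show 4 * (ℓ : ℝ) - 2 = 2 * (2 * ℓ - 1) by ring]
  field_simp
  ring

/-- Lower bound via the Lovász Local Lemma: for every `ℓ ≥ 2`,
`ex(Q_n, C_{2ℓ}) = Ω(n^(1/2 + 1/(4ℓ-2)) * 2^n)`. -/
theorem extremal_number_cycle_hypercube_lower (ℓ : ℕ) (hℓ : 2 ≤ ℓ) :
    ∃ c > (0 : ℝ), ∃ n₀ : ℕ, ∀ n ≥ n₀, ∃ G : SimpleGraph (Finset (Fin n)),
      G ≤ Qgraph n ∧ ¬ GContains (SimpleGraph.cycleGraph (2 * ℓ)) G ∧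
      c * (n : ℝ) ^ ((1 : ℝ) / 2 + 1 / (4 * (ℓ : ℝ) - 2)) * 2 ^ n ≤
        (G.edgeSet.ncard : ℝ) := by
  set L := ℓ ^ (2 * ℓ)
  set a : ℝ := ((ℓ - 1 : ℕ) : ℝ) / ((2 * ℓ - 1 : ℕ) : ℝ)
  refine ⟨1 / (32 * L), by positivity, 1, fun n hn => ?_⟩
  obtain ⟨K, hK, hKpow, hKle⟩ :=
    exists_pow_le_pow_and_le_rpow (p := ℓ - 1) (C := 4 * L) hn (by omega : 2 * ℓ - 1 ≠ 0)
      (by positivity)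
  obtain ⟨G, hle, hfree, hcard⟩ := Qgraph.exists_cycleGraph_free_subgraph hℓ hK hKpow
  refine ⟨G, hle, hfree, ?_⟩
  have hcard' : (n : ℝ) ^ a * ((n : ℝ) ^ ((1 : ℝ) / 2 + 1 / (4 * (ℓ : ℝ) - 2)) * 2 ^ n) ≤
      (n : ℝ) ^ a * (32 * L * G.edgeSet.ncard) :=
    calc _ = (n : ℝ) * 2 ^ n := by
          rw [← mul_assoc, ← Real.rpow_add (by positivity),
            cast_sub_one_div_cast_two_mul_sub_one_add_eq_one (by omega), Real.rpow_one]
      _ ≤ 4 * K * G.edgeSet.ncard := by exact_mod_cast hcard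
      _ ≤ 4 * (2 * (4 * L) * (n : ℝ) ^ a) * G.edgeSet.ncard := by gcongr; exact_mod_cast hKle
      _ = _ := by ring
  have := le_of_mul_le_mul_left hcard' (by positivity)
  rw [mul_assoc, one_div_mul_eq_div, div_le_iff₀ (by positivity)]
  linarith
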